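/- arXiv:2008.08174 — 2 statements merged into one kernel-verified Lean document; each statement's English description precedes it below -/
import Mathlib

section
/- Let E₁ be the set of operations on binary strings that increase the length by one, consisting of: inserting a single 0, inserting a single 1, replacing a 0 by the adjacent pair 11, and replacing a 1 by the adjacent pair 00. Then for any integers n ≥ 1, 0 ≤ a ≤ 2(n+1), 0 ≤ b ≤ 4, 0 ≤ c ≤ 2n, and any u, v ∈ C_{(a,b,c)}: if some binary word w ∈ {0,1}^{n+1} can be obtained from u by one operation from E₁ and also obtained from v by one operation from E₁, then u = v. -/
namespace BinCode

/-- Hamming weight of a binary string. -/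
def wt (u : List Bool) : ℕ := u.count true

/-- The VT syndrome `Σ_{i=1}^{|u|} i·u_i` (positions 1-indexed). -/
def vtSum (u : List Bool) : ℕ := (u.zipIdx.map fun p => if p.1 then p.2 + 1 else 0).sum

/-- `Σ_{i=1}^{|u|} i · (u_1 + ⋯ + u_i)`. -/
def wSum (u : List Bool) : ℕ :=
  ((List.range u.length).map fun i => (i + 1) * wt (u.take (i + 1))).sum

/-- The (variable-length) Varshamov–Tenengolts code `C_VT(α, m)`. -/
def CVT (α m : ℕ) : Set (List Bool) := {z | z.length ≤ m - 1 ∧ vtSum z % m = α}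

/-- The binary code `C_{(a,b,c)} ⊆ {0,1}^n`. -/
def Cabc (n a b c : ℕ) : Set (List Bool) :=
  {u | u.length = n ∧ vtSum u % (2 * n + 3) = a ∧ wt u % 5 = b ∧
    wSum u % (2 * n + 1) = c}

/-- `w` is obtained from `u` by deleting one bit. -/
def delBit (u w : List Bool) : Prop := ∃ i, i < u.length ∧ w = u.eraseIdx i

/-- `w` is obtained from `u` by inserting the bit `b` at some position. -/
def insBitAt (u w : List Bool) (b : Bool) : Prop :=
  ∃ i, i ≤ u.length ∧ w = u.take i ++ b :: u.drop i

/-- `w` is obtained from `u` by inserting one bit. -/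
def insBit (u w : List Bool) : Prop := ∃ b, insBitAt u w b

/-- Flip the bit at 0-based index `i`. -/
def flipAt (u : List Bool) (i : ℕ) : List Bool := u.set i (!(u.getD i false))

/-- `w` is obtained from `u` by flipping one bit. -/
def flip1 (u w : List Bool) : Prop := ∃ i, i < u.length ∧ w = flipAt u i

/-- `w` is obtained from `u` by flipping two adjacent bits. -/
def flip2 (u w : List Bool) : Prop :=
  ∃ i, i + 1 < u.length ∧ w = flipAt (flipAt u i) (i + 1)

/-- `w` is obtained from `u` by replacing one bit by two adjacent bits via
`0 → 11` or `1 → 00`. -/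
def expand1 (u w : List Bool) : Prop :=
  ∃ i, i < u.length ∧
    ((u.getD i false = false ∧ w = u.take i ++ true :: true :: u.drop (i + 1)) ∨
     (u.getD i false = true ∧ w = u.take i ++ false :: false :: u.drop (i + 1)))

/-- `w` is obtained from `u` by inserting the adjacent pair `b b`. -/
def insPair (u w : List Bool) (b : Bool) : Prop :=
  ∃ i, i ≤ u.length ∧ w = u.take i ++ b :: b :: u.drop i

/-- `w` is obtained from `u` by replacing an occurrence of `1` by `010`. -/
def oneTo010 (u w : List Bool) : Prop :=
  ∃ i, i < u.length ∧ u.getD i false = true ∧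
    w = u.take i ++ false :: true :: false :: u.drop (i + 1)


/-- The set `E₁` of operations increasing the length by one: inserting a `0`,
inserting a `1`, and the replacements `0 → 11` and `1 → 00`. -/
def E1 (u w : List Bool) : Prop :=
  insBitAt u w false ∨ insBitAt u w true ∨ expand1 u w

/-!
Under the four operations of `E₁` (insert `0`, insert `1`, `0 → 11`, `1 → 00`) the weight
changes by `0`, `1`, `2` and `-1`. These are distinct modulo `5`, so `u` and `v` reach `w`
by the same kind of operation. For that kind, the VT syndromes of `w` and of the source word
differ by an amount that is monotone in the position of the operation, strictly so except
across a run of the inserted bit (where the source words coincide anyway), and that varies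
by less than `2n + 3`. Hence equal syndromes modulo `2n + 3` give `u = v`.
-/

@[simp] lemma wt_nil : wt [] = 0 := rfl

@[simp] lemma wt_cons (a : Bool) (l : List Bool) : wt (a :: l) = a.toNat + wt l := by
  cases a <;> simp [wt, Nat.add_comm]

@[simp] lemma wt_append (x y : List Bool) : wt (x ++ y) = wt x + wt y := List.count_append

lemma wt_le_length (l : List Bool) : wt l ≤ l.length := List.count_le_length

lemma forall_mem_eq_of_wt_eq {l : List Bool} {b : Bool} (h : wt l = b.toNat * l.length) :
    ∀ x ∈ l, x = b := by
  cases b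
  · simpa [wt, List.count_eq_zero] using h
  · simpa [wt, List.count_eq_length, eq_comm] using h

lemma sum_map_zipIdx_eq_vtSum (l : List Bool) (k : ℕ) :
    ((l.zipIdx k).map fun p => if p.1 then p.2 + 1 else 0).sum = vtSum l + k * wt l := by
  induction l generalizing k with
  | nil => simp [vtSum]
  | cons a l ih =>
    rw [vtSum, List.zipIdx_cons, List.zipIdx_cons, List.map_cons, List.map_cons, List.sum_cons,
      List.sum_cons, ih, ih, wt_cons]
    cases a <;> simp only [Bool.false_eq_true, ↓reduceIte, Bool.toNat_false, Bool.toNat_true,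
      zero_add, one_mul] <;> ring

lemma vtSum_append (x y : List Bool) :
    vtSum (x ++ y) = vtSum x + vtSum y + x.length * wt y := by
  rw [vtSum, List.zipIdx_append, List.map_append, List.sum_append, zero_add,
    sum_map_zipIdx_eq_vtSum, sum_map_zipIdx_eq_vtSum]
  ring

lemma vtSum_cons (a : Bool) (l : List Bool) : vtSum (a :: l) = a.toNat + vtSum l + wt l := by
  rw [← List.singleton_append, vtSum_append]
  cases a <;> simp [vtSum]

lemma vtSum_insert (p s : List Bool) (b : Bool) :
    vtSum (p ++ b :: s) = vtSum (p ++ s) + (b.toNat * (p.length + 1) + wt s) := by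
  simp only [vtSum_append, vtSum_cons, wt_cons]
  ring

lemma vtSum_expand (p s : List Bool) (c : Bool) :
    vtSum (p ++ c :: c :: s) + (!c).toNat * (p.length + 1) =
      vtSum (p ++ (!c) :: s) + (c.toNat * (2 * p.length + 3) + wt s) := by
  simp only [vtSum_append, vtSum_cons, wt_cons]
  cases c <;> simp only [Bool.not_false, Bool.not_true, Bool.toNat_false, Bool.toNat_true,
    zero_mul, one_mul, zero_add, add_zero] <;> ring

lemma _root_.Nat.ModEq.eq_of_add_eq_add {m A B x y : ℕ} (h : A ≡ B [MOD m]) (he : A + x = B + y)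
    (hx : x < m) (hy : y < m) : x = y :=
  (Nat.ModEq.add_left_cancel h (he ▸ Nat.ModEq.refl _)).eq_of_lt_of_lt hx hy

lemma _root_.List.exists_eq_append_of_append_eq_append_of_length_le {α : Type*}
    {p p' x y : List α} (h : p ++ x = p' ++ y) (hle : p.length ≤ p'.length) :
    ∃ r, p' = p ++ r ∧ x = r ++ y := by
  rcases List.append_eq_append_iff.1 h with h | ⟨r, rfl, rfl⟩
  · exact h
  · obtain rfl : r = [] := List.eq_nil_of_length_eq_zero (by rw [List.length_append] at hle; omega)
    exact ⟨[], by simp, by simp⟩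

lemma _root_.List.append_cons_eq_cons_append_of_forall_eq {α : Type*} {r s : List α} {b : α}
    (h : ∀ x ∈ r, x = b) : r ++ b :: s = b :: (r ++ s) := by
  induction r with
  | nil => rfl
  | cons a r ih =>
    obtain rfl := h a List.mem_cons_self
    rw [List.cons_append, ih fun x hx => h x (List.mem_cons_of_mem _ hx), List.cons_append]

theorem append_eq_append_of_insert_eq_insert {m : ℕ} {p s p' s' : List Bool} {b : Bool}
    (hm : (p ++ s).length + 2 ≤ m) (hvt : vtSum (p ++ s) ≡ vtSum (p' ++ s') [MOD m])
    (hw : p ++ b :: s = p' ++ b :: s') : p ++ s = p' ++ s' := by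
  wlog hle : p.length ≤ p'.length generalizing p s p' s'
  · have hlen := congrArg List.length hw
    simp only [List.length_append, List.length_cons] at hlen hm
    exact (this (by simp only [List.length_append]; omega) hvt.symm hw.symm (by omega)).symm
  obtain ⟨r, rfl, hs⟩ := List.exists_eq_append_of_append_eq_append_of_length_le hw hle
  have hwt : wt s = wt r + wt s' := by
    have := congrArg wt hs
    simp only [wt_cons, wt_append] at this
    omega
  have hlen : s.length = r.length + s'.length := by
    have := congrArg List.length hs
    simp only [List.length_cons, List.length_append] at this
    omega
  have := wt_le_length s
  have := wt_le_length s'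
  have hr : wt r = b.toNat * r.length := by
    have hu := vtSum_insert p s b
    have hv := vtSum_insert (p ++ r) s' b
    rw [← hw] at hv
    cases b <;> simp only [Bool.toNat_false, Bool.toNat_true, zero_mul, one_mul, zero_add,
      List.length_append] at hu hv hm ⊢
    all_goals
      have := hvt.eq_of_add_eq_add (hu.symm.trans hv) (by omega) (by omega)
      omega
  rw [List.append_cons_eq_cons_append_of_forall_eq (forall_mem_eq_of_wt_eq hr),
    List.cons_inj_right] at hs
  rw [hs, List.append_assoc]

theorem append_cons_eq_of_expand_eq_expand {m : ℕ} {p s p' s' : List Bool} {c : Bool}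
    (hm : 2 * (p ++ (!c) :: s).length + 2 ≤ m)
    (hvt : vtSum (p ++ (!c) :: s) ≡ vtSum (p' ++ (!c) :: s') [MOD m])
    (hw : p ++ c :: c :: s = p' ++ c :: c :: s') : p ++ (!c) :: s = p' ++ (!c) :: s' := by
  wlog hle : p.length ≤ p'.length generalizing p s p' s'
  · have hlen := congrArg List.length hw
    simp only [List.length_append, List.length_cons] at hlen hm
    exact (this (by simp only [List.length_append, List.length_cons]; omega) hvt.symm hw.symm
      (by omega)).symm
  obtain ⟨r, rfl, hs⟩ := List.exists_eq_append_of_append_eq_append_of_length_le hw hle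
  have hwt : wt s = wt r + wt s' := by
    have := congrArg wt hs
    simp only [wt_cons, wt_append] at this
    omega
  have hlen : s.length = r.length + s'.length := by
    have := congrArg List.length hs
    simp only [List.length_cons, List.length_append] at this
    omega
  have := wt_le_length r
  have := wt_le_length s
  have := wt_le_length s'
  obtain rfl : r = [] := by
    rw [← List.length_eq_zero_iff]
    have hu := vtSum_expand p s c
    have hv := vtSum_expand (p ++ r) s' c
    rw [← hw] at hv
    cases c <;> simp only [Bool.not_false, Bool.not_true, Bool.toNat_false, Bool.toNat_true,
      zero_mul, one_mul, add_zero, zero_add, List.length_append, List.length_cons] at hu hv hm hvt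
    · have := hvt.eq_of_add_eq_add (x := wt s + (p.length + r.length + 1))
        (y := wt s' + (p.length + 1)) (by omega) (by omega) (by omega)
      omega
    · have := hvt.eq_of_add_eq_add (hu.symm.trans hv) (by omega) (by omega)
      omega
  simp only [List.nil_append, List.cons.injEq, true_and] at hs
  rw [hs, List.append_nil]

lemma insert_bit_eq_of_wt_modEq {p s p' s' : List Bool} {b b' : Bool}
    (hwt : wt (p ++ s) ≡ wt (p' ++ s') [MOD 5]) (hw : p ++ b :: s = p' ++ b' :: s') :
    b = b' := by
  have := congrArg wt hw
  simp only [Nat.ModEq, wt_append, wt_cons] at hwt this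
  cases b <;> cases b' <;>
    simp only [Bool.toNat_false, Bool.toNat_true, zero_add] at this ⊢ <;> omega

lemma expand_bit_eq_of_wt_modEq {p s p' s' : List Bool} {c c' : Bool}
    (hwt : wt (p ++ (!c) :: s) ≡ wt (p' ++ (!c') :: s') [MOD 5])
    (hw : p ++ c :: c :: s = p' ++ c' :: c' :: s') : c = c' := by
  have := congrArg wt hw
  simp only [Nat.ModEq, wt_append, wt_cons] at hwt this
  cases c <;> cases c' <;> simp only [Bool.not_false, Bool.not_true, Bool.toNat_false,
    Bool.toNat_true, zero_add] at hwt this ⊢ <;> omega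

lemma insert_ne_expand_of_wt_modEq {p s p' s' : List Bool} {b c : Bool}
    (hwt : wt (p ++ s) ≡ wt (p' ++ (!c) :: s') [MOD 5]) :
    p ++ b :: s ≠ p' ++ c :: c :: s' := by
  intro hw
  have := congrArg wt hw
  simp only [Nat.ModEq, wt_append, wt_cons] at hwt this
  cases b <;> cases c <;> simp only [Bool.not_false, Bool.not_true, Bool.toNat_false,
    Bool.toNat_true, zero_add] at hwt this <;> omega

theorem E1.exists_insert_or_expand {u w : List Bool} (h : E1 u w) :
    (∃ b p s, u = p ++ s ∧ w = p ++ b :: s) ∨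
      ∃ c p s, u = p ++ (!c) :: s ∧ w = p ++ c :: c :: s := by
  have split : ∀ i < u.length, u = u.take i ++ u.getD i false :: u.drop (i + 1) := by
    intro i hi
    rw [List.getD_eq_getElem _ _ hi, List.getElem_cons_drop, List.take_append_drop]
  rcases h with ⟨i, -, rfl⟩ | ⟨i, -, rfl⟩ | ⟨i, hi, ⟨hui, rfl⟩ | ⟨hui, rfl⟩⟩
  · exact .inl ⟨false, _, _, (List.take_append_drop i u).symm, rfl⟩
  · exact .inl ⟨true, _, _, (List.take_append_drop i u).symm, rfl⟩
  · exact .inr ⟨true, _, _, (split i hi).trans (by rw [hui]; rfl), rfl⟩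
  · exact .inr ⟨false, _, _, (split i hi).trans (by rw [hui]; rfl), rfl⟩

theorem code_abc_corrects_plus_one_general
    (n a b c : ℕ)
    (u v : List Bool) (hu : u ∈ Cabc n a b c) (hv : v ∈ Cabc n a b c)
    (w : List Bool)
    (hw1 : E1 u w) (hw2 : E1 v w) : u = v := by
  obtain ⟨hn, hu_vt, hu_wt, -⟩ := hu
  obtain ⟨-, hv_vt, hv_wt, -⟩ := hv
  have hvt : vtSum u ≡ vtSum v [MOD 2 * n + 3] := hu_vt.trans hv_vt.symm
  have hwt : wt u ≡ wt v [MOD 5] := hu_wt.trans hv_wt.symm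
  rcases hw1.exists_insert_or_expand with ⟨d, p, s, rfl, rfl⟩ | ⟨e, p, s, rfl, rfl⟩ <;>
    rcases hw2.exists_insert_or_expand with ⟨d', p', s', rfl, hw⟩ | ⟨e', p', s', rfl, hw⟩
  · obtain rfl := insert_bit_eq_of_wt_modEq hwt hw
    exact append_eq_append_of_insert_eq_insert (by omega) hvt hw
  · exact absurd hw (insert_ne_expand_of_wt_modEq hwt)
  · exact absurd hw.symm (insert_ne_expand_of_wt_modEq hwt.symm)
  · obtain rfl := expand_bit_eq_of_wt_modEq hwt hw
    exact append_cons_eq_of_expand_eq_expand (by omega) hvt hw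

/-- `C_{(a,b,c)}` corrects a single occurrence of an operation
from `E₁`. -/
theorem code_abc_corrects_plus_one
    (n a b c : ℕ) (hn : 1 ≤ n) (ha : a ≤ 2 * (n + 1)) (hb : b ≤ 4) (hc : c ≤ 2 * n)
    (u v : List Bool) (hu : u ∈ Cabc n a b c) (hv : v ∈ Cabc n a b c)
    (w : List Bool) (hwlen : w.length = n + 1)
    (hw1 : E1 u w) (hw2 : E1 v w) : u = v :=
  code_abc_corrects_plus_one_general n a b c u v hu hv w hw1 hw2

end BinCode
end

section
/- Let q ≥ 2, k ≥ 1, n > 2k, let x ∈ Irr(n) be irreducible, let x'' ∈ D_k^{*(≤1)}(x), and set μ = μ(φ̄(x)), μ'' = μ(φ̄(x'')), μ_j = ins_k(μ, j) and μ''_j = ins_k(μ'', j) for j ∈ {1,…,k}. If |μ''| = |μ| + 2k, then there exist an index j* ∈ {1,…,k} and a symbol a ∈ Σ_q∖{0} such that μ''_{j*} is obtained from μ_{j*} by inserting the two adjacent symbols a, (−a mod q) at some position, and for every j ≠ j*, μ''_j is obtained from μ_j by inserting two symbols 0 that are either adjacent or separated by exactly one (unchanged) symbol of μ_j. -/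
open List

namespace NoisyDup

variable {q : ℕ}

/-- Tandem duplication `T_{i,k}`: duplicates the length-`k` substring starting
after position `i` (0-based index `i`), if it exists. -/
def dup (i k : ℕ) (x : List (ZMod q)) : List (ZMod q) :=
  if i + k ≤ x.length then x.take i ++ (x.drop i).take k ++ x.drop i else x

/-- Add `a` (mod `q`) to the entry at 0-based index `i`. -/
def addAt (x : List (ZMod q)) (i : ℕ) (a : ZMod q) : List (ZMod q) :=
  x.set i (x.getD i 0 + a)

/-- One exact tandem duplication of length `k`. -/
def ExactStep (k : ℕ) (x y : List (ZMod q)) : Prop :=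
  ∃ i, i + k ≤ x.length ∧ y = dup i k x

/-- One noisy duplication of length `k`: an exact duplication followed by adding
some `a ≠ 0` to one symbol of the inserted copy (positions are 1-indexed). -/
def NoisyStep (k : ℕ) (x y : List (ZMod q)) : Prop :=
  ∃ (i : ℕ) (a : ZMod q) (j : ℕ), i + k ≤ x.length ∧ a ≠ 0 ∧
    i + k + 1 ≤ j ∧ j ≤ i + 2 * k ∧ y = addAt (dup i k x) (j - 1) a

/-- Descendants by exact duplications only: `D_k^{*(0)}`. -/
def ExactDesc (k : ℕ) (x y : List (ZMod q)) : Prop :=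
  Relation.ReflTransGen (ExactStep k) x y

/-- The descendant cone `D_k^{*(≤1)}`: any number of exact duplications and at
most one noisy duplication. -/
def descCone (k : ℕ) (x : List (ZMod q)) : Set (List (ZMod q)) :=
  {y | ExactDesc k x y ∨ ∃ u v, ExactDesc k x u ∧ NoisyStep k u v ∧ ExactDesc k v y}

/-- `φ̂(x)`: the first `k` symbols. -/
def hatPhi (k : ℕ) (x : List (ZMod q)) : List (ZMod q) := x.take k

/-- `φ̄(x)_i = x_{i+k} - x_i` (1-indexed), a string of length `|x| - k`. -/
def barPhi (k : ℕ) (x : List (ZMod q)) : List (ZMod q) :=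
  (List.range (x.length - k)).map fun i => x.getD (i + k) 0 - x.getD i 0

/-- Auxiliary for `mu`: `cnt` counts the current run of zeros. -/
def muAux (k : ℕ) : ℕ → List (ZMod q) → List (ZMod q)
  | cnt, [] => List.replicate (cnt % k) 0
  | cnt, a :: t =>
      if a = 0 then muAux k (cnt + 1) t
      else List.replicate (cnt % k) 0 ++ a :: muAux k 0 t

/-- `μ(z)`: reduce the length of every maximal run of zeros modulo `k`. -/
def mu (k : ℕ) (z : List (ZMod q)) : List (ZMod q) := muAux k 0 z

/-- `x` contains a tandem repeat of length `k`. -/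
def HasRepeat (k : ℕ) (x : List (ZMod q)) : Prop :=
  ∃ i, i + 2 * k ≤ x.length ∧ (x.drop i).take k = (x.drop (i + k)).take k

/-- `x` is irreducible: it contains no tandem repeat of length `k`. -/
def IsIrreducible (k : ℕ) (x : List (ZMod q)) : Prop := ¬ HasRepeat k x

/-- The duplication root: the (unique) irreducible ancestor of `x` under exact
duplications of length `k`. -/
noncomputable def rt (k : ℕ) (x : List (ZMod q)) : List (ZMod q) :=
  haveI := Classical.propDecidable (∃ z, IsIrreducible k z ∧ ExactDesc k z x)
  if h : ∃ z, IsIrreducible k z ∧ ExactDesc k z x then h.choose else x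

/-- The set of irreducible strings of length `n` over `Σ_q`. -/
def Irr (k n : ℕ) : Set (List (ZMod q)) := {x | x.length = n ∧ IsIrreducible k x}

/-- `ins_k(u, j)`: the subsequence of entries in (1-indexed) positions congruent
to `j` modulo `k`. -/
def splitk (k j : ℕ) (u : List (ZMod q)) : List (ZMod q) :=
  ((u.zipIdx.map Prod.swap).filter fun p => p.1 % k == j - 1).map Prod.snd

/-- The interleaving `inl(u) = ins_k(u,1) ⋯ ins_k(u,k)`. -/
def inl (k : ℕ) (u : List (ZMod q)) : List (ZMod q) :=
  ((List.range k).map fun j => splitk k (j + 1) u).flatten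

/-- The indicator `Γ(z)` of the nonzero entries of `z`. -/
def gamma (z : List (ZMod q)) : List Bool := z.map fun a => decide (a ≠ 0)

/-- The cumulative-sum map (mod `q`). -/
def cusum (z : List (ZMod q)) : List (ZMod q) :=
  (List.range z.length).map fun i => (z.take (i + 1)).sum

/-- Hamming weight of a binary string. -/
def wt (u : List Bool) : ℕ := u.count true

/-- The VT syndrome `Σ i·u_i` (1-indexed). -/
def vtSum (u : List Bool) : ℕ := ((u.zipIdx.map Prod.swap).map fun p => if p.2 then p.1 + 1 else 0).sum

/-- The (variable-length) Varshamov–Tenengolts code. -/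
def CVT (α m : ℕ) : Set (List Bool) := {z | z.length ≤ m - 1 ∧ vtSum z % m = α}

/-- `Σ_{i=1}^{|u|} i · (u_1 + ⋯ + u_i)`. -/
def wSum (u : List Bool) : ℕ :=
  ((List.range u.length).map fun i => (i + 1) * wt (u.take (i + 1))).sum

/-- Tenengolts' binary map `ζ`. -/
def zeta (z : List (ZMod q)) : List Bool :=
  (z.zipIdx.map Prod.swap).map fun p => if p.1 = 0 then true else decide ((z.getD (p.1 - 1) 0).val ≤ p.2.val)

/-- `Σ_{i=1}^{|z|} (i-1)·ζ(z)_i`. -/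
def tqSum (z : List (ZMod q)) : ℕ := (((zeta z).zipIdx.map Prod.swap).map fun p => if p.2 then p.1 else 0).sum

/-- Tenengolts' (variable-length) `q`-ary single-indel-correcting code. -/
def CTq (α β m : ℕ) : Set (List (ZMod q)) :=
  {z | z.length ≤ m ∧ (z.map ZMod.val).sum % q = α ∧ tqSum z % m = β}

/-- The length of `s_j = Γ(ins_k(μ,j))` for a codeword of length `n`
(the number of positions in `{1,…,n-k}` congruent to `j` mod `k`). -/
def sLen (k n j : ℕ) : ℕ := (List.range (n - k)).countP fun i => i % k == j - 1

/-- Admissibility of the parameters of the code `C_nd`. -/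
def Admissible (q k n : ℕ) (a c : ℕ → ℕ) (b a1 a2 a3 a4 b1 b2 b3 b4 : ℕ) : Prop :=
  (∀ j ∈ Finset.Icc 1 k, a j ≤ 2 * (sLen k n j + 1)) ∧
  (∀ j ∈ Finset.Icc 1 k, c j ≤ 2 * sLen k n j) ∧
  b ≤ 4 ∧ a1 ≤ q - 1 ∧ a2 ≤ q - 1 ∧ a3 ≤ q - 1 ∧ a4 ≤ q - 1 ∧
  b1 ≤ (n - k) / 2 ∧ b2 ≤ (n - k) / 2 ∧ b3 ≤ n - k - 1 ∧ b4 ≤ n - k - 1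

/-- The code `C_nd` for the noisy duplication channel. -/
def Cnd (k n : ℕ) (a c : ℕ → ℕ) (b a1 a2 a3 a4 b1 b2 b3 b4 : ℕ) : Set (List (ZMod q)) :=
  {x | x.length = n ∧ IsIrreducible k x ∧
    (∀ j ∈ Finset.Icc 1 k,
        gamma (splitk k j (mu k (barPhi k x))) ∈
          CVT (a j) (2 * (gamma (splitk k j (mu k (barPhi k x)))).length + 3)) ∧
    (∀ j ∈ Finset.Icc 1 k,
        wSum (gamma (splitk k j (mu k (barPhi k x)))) %
          (2 * (gamma (splitk k j (mu k (barPhi k x)))).length + 1) = c j) ∧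
    ((Finset.Icc 1 k).sum fun j => wt (gamma (splitk k j (mu k (barPhi k x))))) % 5 = b ∧
    splitk 2 1 (inl k (mu k (barPhi k x))) ∈ CTq a1 b1 ((n - k + 1) / 2) ∧
    splitk 2 2 (inl k (mu k (barPhi k x))) ∈ CTq a2 b2 ((n - k + 1) / 2) ∧
    cusum (inl k (mu k (barPhi k x))) ∈ CTq a3 b3 (n - k) ∧
    inl k (mu k (barPhi k x)) ∈ CTq a4 b4 (n - k)}

/-- `w` is obtained from `u` by deleting one occurrence of the symbol `b`. -/
def delSymb (u w : List (ZMod q)) (b : ZMod q) : Prop :=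
  ∃ i, i < u.length ∧ u.getD i 0 = b ∧ w = u.eraseIdx i

/-- `w` is obtained from `u` by inserting the symbol `b` at some position. -/
def insOne (u w : List (ZMod q)) (b : ZMod q) : Prop :=
  ∃ i, i ≤ u.length ∧ w = u.take i ++ b :: u.drop i

/-- `w` is obtained from `u` by inserting the adjacent pair `b, c`. -/
def insPair (u w : List (ZMod q)) (b c : ZMod q) : Prop :=
  ∃ i, i ≤ u.length ∧ w = u.take i ++ b :: c :: u.drop i

/-- `w` is obtained from `u` by inserting two `0`s separated by exactly one
(unchanged) symbol of `u`. -/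
def insSpread0 (u w : List (ZMod q)) : Prop :=
  ∃ i, i < u.length ∧ w = u.take i ++ 0 :: u.getD i 0 :: 0 :: u.drop (i + 1)

/-- `w` is obtained from `u` by inserting a nonzero `a` and replacing the
symbol `c` immediately following the insertion point by `c - a`. -/
def insSub (u w : List (ZMod q)) : Prop :=
  ∃ a : ZMod q, a ≠ 0 ∧ ∃ i, i < u.length ∧
    w = u.take i ++ a :: (u.getD i 0 - a) :: u.drop (i + 1)

/-- `w` is obtained from `u` by replacing a single symbol `0` by a nonzero symbol. -/
def subOne (u w : List (ZMod q)) : Prop :=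
  ∃ i, i < u.length ∧ u.getD i 0 = 0 ∧ ∃ a : ZMod q, a ≠ 0 ∧ w = u.set i a

/-- `w` is obtained from `u` by replacing two adjacent symbols `0, c` by
`a, c - a` for some nonzero `a`. -/
def subTwo (u w : List (ZMod q)) : Prop :=
  ∃ i, i + 1 < u.length ∧ u.getD i 0 = 0 ∧ ∃ a : ZMod q, a ≠ 0 ∧
    w = u.take i ++ a :: (u.getD (i + 1) 0 - a) :: u.drop (i + 2)

/-- `w` is obtained from `u` by swapping an adjacent pair `b, 0` (with `b ≠ 0`)
into `0, b`. -/
def swapPair (u w : List (ZMod q)) : Prop :=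
  ∃ i, i + 1 < u.length ∧ u.getD i 0 ≠ 0 ∧ u.getD (i + 1) 0 = 0 ∧
    w = u.take i ++ 0 :: u.getD i 0 :: u.drop (i + 2)

/-- `w` is obtained from `u` by deleting a single symbol. -/
def delQ (u w : List (ZMod q)) : Prop := ∃ i, i < u.length ∧ w = u.eraseIdx i

/-- `w` is obtained from `u` by inserting a single symbol. -/
def insQ (u w : List (ZMod q)) : Prop :=
  ∃ (i : ℕ) (b : ZMod q), i ≤ u.length ∧ w = u.take i ++ b :: u.drop i

/-!
Under `φ̄`, an exact duplication inserts a block `0^k`, which `μ` erases, so only the noisy step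
matters; it inserts `0^k` and then adds `a` inside the inserted block and `-a` exactly `k`
positions later. A nonzero symbol that splits a zero run of length `L₁ + 1 + L₂` changes the
`μ`-length of that run from `(L₁ + 1 + L₂) % k` to `L₁ % k + 1 + L₂ % k`, a gain of `0` or `k`.
A total gain of `2k` therefore forces `a` and `-a` to land in zero runs that each gain exactly `k`,
and then `μ(x'')` arises from `μ(x)` by inserting two windows `0^s a 0^(k-1-s)` and
`0^(k-1-s') (-a) 0^s'` of length `k`, with `a` and `-a` still `k` apart. A window of length `k`
meets every residue class mod `k` exactly once (in `a`, resp. `-a`, for the class of `a`, in a `0`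
otherwise), and the stretch between the windows is shorter than `k`, so it meets each class at
most once and misses the class of `a`.
-/

lemma eq_mod_or_eq_mod_add {k s : ℕ} (hs : s < 2 * k) : s = s % k ∨ s = s % k + k := by
  rcases Nat.lt_or_ge s k with h | h
  · exact Or.inl (Nat.mod_eq_of_lt h).symm
  · right
    rw [Nat.mod_eq_sub_mod h, Nat.mod_eq_of_lt (by omega)]
    omega

lemma mod_add_one_add_mod (k x y : ℕ) : (x % k + 1 + y % k) % k = (x + 1 + y) % k := by
  simp [Nat.add_mod, Nat.add_mod (x % k + 1)]

lemma mod_add_ne_mod {k d : ℕ} (hd : 0 < d) (hdk : d < k) (x : ℕ) : (x + d) % k ≠ x % k := by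
  intro h
  have := Nat.sub_mod_eq_zero_of_mod_eq h
  rw [Nat.add_sub_cancel_left, Nat.mod_eq_of_lt hdk] at this
  omega

lemma set_set_append_cons {α : Type*} (X Y Z : List α) (e f c d : α) :
    ((X ++ e :: (Y ++ f :: Z)).set X.length c).set (X.length + 1 + Y.length) d =
      X ++ c :: (Y ++ d :: Z) := by
  rw [set_append_right _ _ le_rfl, set_append_right _ _ (by omega),
    show X.length + 1 + Y.length - X.length = Y.length + 1 by omega]
  simp

lemma getD_set_of_ne {α : Type*} (l : List α) {i j : ℕ} (h : i ≠ j) (x d : α) :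
    (l.set i x).getD j d = l.getD j d := by
  simp [getD_eq_getElem?_getD, getElem?_set_ne h]

def EndsNonzero (l : List (ZMod q)) : Prop := ∀ g ∈ l.getLast?, g ≠ 0

def StartsNonzero (l : List (ZMod q)) : Prop := ∀ g ∈ l.head?, g ≠ 0

lemma exists_eq_replicate_append (l : List (ZMod q)) :
    ∃ L S, StartsNonzero S ∧ l = replicate L 0 ++ S := by
  induction l with
  | nil => exact ⟨0, [], by simp [StartsNonzero], rfl⟩
  | cons b l ih =>
    by_cases hb : b = 0
    · obtain ⟨L, S, hS, rfl⟩ := ih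
      exact ⟨L + 1, S, hS, by simp [hb, replicate_succ]⟩
    · exact ⟨0, b :: l, by simpa [StartsNonzero] using hb, rfl⟩

lemma exists_eq_append_replicate (l : List (ZMod q)) :
    ∃ P L, EndsNonzero P ∧ l = P ++ replicate L 0 := by
  obtain ⟨L, S, hS, hl⟩ := exists_eq_replicate_append l.reverse
  refine ⟨S.reverse, L, by simpa [EndsNonzero, StartsNonzero, getLast?_reverse] using hS, ?_⟩
  simpa using congrArg reverse hl

lemma exists_eq_replicate_append_append_replicate (l : List (ZMod q)) :
    ∃ b G M, StartsNonzero G ∧ EndsNonzero G ∧ l = replicate b 0 ++ G ++ replicate M 0 := by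
  obtain ⟨b, T, hT, rfl⟩ := exists_eq_replicate_append l
  obtain ⟨G, M, hG, rfl⟩ := exists_eq_append_replicate T
  exact ⟨b, G, M, fun g hg => hT g (by rw [head?_append, Option.mem_def.mp hg]; rfl), hG,
    by rw [append_assoc]⟩

lemma exists_run_around (l : List (ZMod q)) {p : ℕ} (hp : p < l.length) :
    ∃ P L₁ L₂ S, EndsNonzero P ∧ StartsNonzero S ∧
      ∀ b, l.set p b = P ++ replicate L₁ 0 ++ b :: (replicate L₂ 0 ++ S) := by
  obtain ⟨P, L₁, hP, hpre⟩ := exists_eq_append_replicate (l.take p)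
  obtain ⟨L₂, S, hS, hsuf⟩ := exists_eq_replicate_append (l.drop (p + 1))
  refine ⟨P, L₁, L₂, S, hP, hS, fun b => ?_⟩
  rw [← hpre, ← hsuf, set_eq_take_append_cons_drop, if_pos hp]

lemma exists_runs_around_pair (w : List (ZMod q)) {p k : ℕ} (hk : 0 < k)
    (hpk : p + k < w.length) : ∃ Q L₁ b G M₁ M₂ S,
      EndsNonzero Q ∧ StartsNonzero G ∧ EndsNonzero G ∧ StartsNonzero S ∧
      b + G.length + M₁ + 1 = k ∧ ∀ c d, (w.set p c).set (p + k) d =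
        Q ++ replicate L₁ 0 ++ c :: (replicate b 0 ++ G ++ replicate M₁ 0 ++
          d :: (replicate M₂ 0 ++ S)) := by
  obtain ⟨e, f, hw⟩ : ∃ e f,
      w = take p w ++ e :: (take (k - 1) (drop (p + 1) w) ++ f :: drop (p + k + 1) w) := by
    have h₁ : drop (k - 1) (drop (p + 1) w) = w[p + k] :: drop (p + k + 1) w := by
      rw [drop_drop, show p + 1 + (k - 1) = p + k by omega, drop_eq_getElem_cons]
    exact ⟨w[p], w[p + k], by
      rw [← h₁, take_append_drop, ← drop_eq_getElem_cons, take_append_drop]⟩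
  have hXlen : (take p w).length = p := by simp; omega
  have hYlen : (take (k - 1) (drop (p + 1) w)).length = k - 1 := by simp; omega
  generalize take p w = X at hw hXlen
  generalize take (k - 1) (drop (p + 1) w) = Y at hw hYlen
  generalize drop (p + k + 1) w = Z at hw
  obtain ⟨Q, L₁, hQ, rfl⟩ := exists_eq_append_replicate X
  obtain ⟨b, G, M₁, hGs, hGe, rfl⟩ := exists_eq_replicate_append_append_replicate Y
  obtain ⟨M₂, S, hS, rfl⟩ := exists_eq_replicate_append Z
  refine ⟨Q, L₁, b, G, M₁, M₂, S, hQ, hGs, hGe, hS, ?_, fun c d => ?_⟩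
  · simp only [length_append, length_replicate] at hYlen
    omega
  · rw [hw, show p + k = (Q ++ replicate L₁ 0).length + 1 +
      (replicate b 0 ++ G ++ replicate M₁ 0).length by omega, ← hXlen, set_set_append_cons]

section Mu

variable (k : ℕ)

lemma muAux_replicate_append (m : ℕ) (t : List (ZMod q)) (c : ℕ) :
    muAux k c (replicate m 0 ++ t) = muAux k (c + m) t := by
  induction m generalizing c with
  | zero => rfl
  | succ m ih => simp [replicate_succ, muAux, ih, Nat.add_right_comm, Nat.add_assoc]

lemma mu_cons_of_ne_zero {g : ZMod q} (hg : g ≠ 0) (t : List (ZMod q)) :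
    mu k (g :: t) = g :: mu k t := by
  simp [mu, muAux, hg]

lemma mu_replicate_append {S : List (ZMod q)} (hS : StartsNonzero S) (L : ℕ) :
    mu k (replicate L 0 ++ S) = replicate (L % k) 0 ++ mu k S := by
  rw [mu, muAux_replicate_append, zero_add]
  cases S with
  | nil => simp [muAux, mu]
  | cons g t => simp [muAux, mu, hS g rfl]

lemma muAux_append_of_endsNonzero {P : List (ZMod q)} (hP : EndsNonzero P) (X : List (ZMod q))
    (c : ℕ) (hc : P = [] → c = 0) : muAux k c (P ++ X) = muAux k c P ++ mu k X := by
  induction P generalizing c with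
  | nil => simp [hc rfl, muAux, mu]
  | cons b P ih =>
    have hP' : EndsNonzero P := fun g hg => hP g (by simp_all [getLast?_cons])
    by_cases hb : b = 0
    · subst hb
      cases P with
      | nil => exact absurd rfl (hP 0 rfl)
      | cons b' P =>
        have hzero : ∀ t : List (ZMod q), muAux k c (0 :: t) = muAux k (c + 1) t := by
          simp [muAux]
        rw [cons_append, hzero, hzero, ih hP' (c + 1) (by simp)]
    · simp [muAux, hb, ih hP' 0 (fun _ => rfl)]

lemma mu_append_of_endsNonzero {P : List (ZMod q)} (hP : EndsNonzero P) (X : List (ZMod q)) :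
    mu k (P ++ X) = mu k P ++ mu k X :=
  muAux_append_of_endsNonzero k hP X 0 fun _ => rfl

lemma muAux_of_add_length_lt (P : List (ZMod q)) (c : ℕ) (h : c + P.length < k) :
    muAux k c P = replicate c 0 ++ P := by
  induction P generalizing c with
  | nil => simp [muAux, Nat.mod_eq_of_lt (by simpa using h : c < k)]
  | cons b P ih =>
    simp only [length_cons] at h
    by_cases hb : b = 0
    · simp [muAux, hb, ih (c + 1) (by omega), replicate_succ']
    · simp [muAux, hb, ih 0 (by omega), Nat.mod_eq_of_lt (by omega : c < k)]

lemma mu_of_length_lt {P : List (ZMod q)} (hP : P.length < k) : mu k P = P :=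
  muAux_of_add_length_lt k P 0 (by omega)

lemma mu_append_cons_of_length_lt {X : List (ZMod q)} (hX : X.length < k) {g : ZMod q}
    (hg : g ≠ 0) (R : List (ZMod q)) : mu k (X ++ g :: R) = X ++ g :: mu k R := by
  obtain ⟨P, L, hP, rfl⟩ := exists_eq_append_replicate X
  simp only [length_append, length_replicate] at hX
  rw [append_assoc, mu_append_of_endsNonzero k hP, mu_of_length_lt k (by omega),
    mu_replicate_append k (by simpa [StartsNonzero] using hg), Nat.mod_eq_of_lt (by omega),
    mu_cons_of_ne_zero k hg, append_assoc]

lemma mu_append_replicate_append (s t : List (ZMod q)) :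
    mu k (s ++ replicate k 0 ++ t) = mu k (s ++ t) := by
  obtain ⟨P, L, hP, rfl⟩ := exists_eq_append_replicate s
  obtain ⟨L', S, hS, rfl⟩ := exists_eq_replicate_append t
  simp only [append_assoc, mu_append_of_endsNonzero k hP, ← append_assoc (replicate _ _),
    ← replicate_add, mu_replicate_append k hS]
  rw [show L + k + L' = L + L' + k by omega, Nat.add_mod_right]

lemma length_mu_run {P S : List (ZMod q)} (hP : EndsNonzero P) (hS : StartsNonzero S)
    (L₁ L₂ : ℕ) (b : ZMod q) :
    (mu k (P ++ replicate L₁ 0 ++ b :: (replicate L₂ 0 ++ S))).length =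
      (mu k P).length + (mu k S).length +
        if b = 0 then (L₁ + 1 + L₂) % k else L₁ % k + 1 + L₂ % k := by
  rw [append_assoc, mu_append_of_endsNonzero k hP]
  rcases eq_or_ne b 0 with rfl | hb
  · rw [← cons_append, ← replicate_succ, ← append_assoc, ← replicate_add,
      mu_replicate_append k hS, show L₁ + (L₂ + 1) = L₁ + 1 + L₂ by omega]
    simp only [length_append, length_replicate, if_true]
    omega
  · rw [mu_replicate_append k (by simpa [StartsNonzero] using hb), mu_cons_of_ne_zero k hb,
      mu_replicate_append k hS]
    simp only [length_append, length_cons, length_replicate, if_neg hb]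
    omega

lemma length_mu_set_le (l : List (ZMod q)) (p : ℕ) (b : ZMod q) :
    (mu k (l.set p b)).length ≤ (mu k l).length + if l.getD p 0 = 0 then k else 0 := by
  rcases Nat.lt_or_ge p l.length with hp | hp
  swap
  · simp [set_eq_of_length_le hp]
  obtain ⟨P, L₁, L₂, S, hP, hS, hset⟩ := exists_run_around l hp
  have hl : l.set p (l.getD p 0) = l := by rw [getD_eq_getElem _ _ hp, set_getElem_self]
  have hc := length_mu_run k hP hS L₁ L₂ (l.getD p 0)
  rw [← hset, hl] at hc
  rw [hset, length_mu_run k hP hS, hc]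
  have key := mod_add_one_add_mod k L₁ L₂
  rcases Nat.eq_zero_or_pos k with rfl | hk
  · simp
  have h₁ : L₁ % k + 1 + L₂ % k < 2 * k := by
    have := Nat.mod_lt L₁ hk
    have := Nat.mod_lt L₂ hk
    omega
  have h₂ := Nat.mod_le (L₁ % k + 1 + L₂ % k) k
  rcases eq_mod_or_eq_mod_add h₁ with h₃ | h₃ <;> split_ifs <;> omega

lemma mu_pair_of_ne_zero {Q B S : List (ZMod q)} (hQ : EndsNonzero Q) (hS : StartsNonzero S)
    (hB : B.length < k) {c d : ZMod q} (hc : c ≠ 0) (hd : d ≠ 0) (L₁ M₂ : ℕ) :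
    mu k (Q ++ replicate L₁ 0 ++ c :: (B ++ d :: (replicate M₂ 0 ++ S))) =
      mu k Q ++ replicate (L₁ % k) 0 ++ c :: (B ++ d :: (replicate (M₂ % k) 0 ++ mu k S)) := by
  rw [append_assoc, mu_append_of_endsNonzero k hQ,
    mu_replicate_append k (by simpa [StartsNonzero] using hc), mu_cons_of_ne_zero k hc,
    mu_append_cons_of_length_lt k hB hd, mu_replicate_append k hS]
  simp only [append_assoc]

lemma mu_zero_pair_of_nil {Q S : List (ZMod q)} (hQ : EndsNonzero Q) (hS : StartsNonzero S)
    (L₁ b M₁ M₂ : ℕ) :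
    mu k (Q ++ replicate L₁ 0 ++ 0 :: (replicate b 0 ++ replicate M₁ 0 ++
        0 :: (replicate M₂ 0 ++ S))) =
      mu k Q ++ replicate ((L₁ + 1 + b + M₁ + 1 + M₂) % k) 0 ++ mu k S := by
  have hsplit : Q ++ replicate L₁ 0 ++ 0 :: (replicate b 0 ++ replicate M₁ 0 ++
      0 :: (replicate M₂ 0 ++ S)) = Q ++ (replicate (L₁ + 1 + b + M₁ + 1 + M₂) 0 ++ S) := by
    simp only [replicate_add, replicate_one, append_assoc, cons_append, nil_append]
  rw [hsplit, mu_append_of_endsNonzero k hQ, mu_replicate_append k hS, append_assoc]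

lemma mu_zero_pair_of_ne_nil {Q G S : List (ZMod q)} (hQ : EndsNonzero Q)
    (hGs : StartsNonzero G) (hGe : EndsNonzero G) (hS : StartsNonzero S) (hG : G ≠ [])
    (hGk : G.length < k) (L₁ b M₁ M₂ : ℕ) :
    mu k (Q ++ replicate L₁ 0 ++ 0 :: (replicate b 0 ++ G ++ replicate M₁ 0 ++
        0 :: (replicate M₂ 0 ++ S))) =
      mu k Q ++ (replicate ((L₁ + 1 + b) % k) 0 ++ G ++ replicate ((M₁ + 1 + M₂) % k) 0) ++
        mu k S := by
  have hGS : StartsNonzero (G ++ (replicate (M₁ + 1 + M₂) 0 ++ S)) := by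
    obtain ⟨g, G', rfl⟩ := exists_cons_of_ne_nil hG
    exact hGs
  have hsplit : Q ++ replicate L₁ 0 ++ 0 :: (replicate b 0 ++ G ++ replicate M₁ 0 ++
      0 :: (replicate M₂ 0 ++ S)) =
        Q ++ (replicate (L₁ + 1 + b) 0 ++ (G ++ (replicate (M₁ + 1 + M₂) 0 ++ S))) := by
    simp only [replicate_add, replicate_one, append_assoc, cons_append, nil_append]
  rw [hsplit, mu_append_of_endsNonzero k hQ, mu_replicate_append k hGS,
    mu_append_of_endsNonzero k hGe, mu_of_length_lt k hGk, mu_replicate_append k hS]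
  simp only [append_assoc]

end Mu

section Residue

variable {α : Type*} (k t : ℕ)

/-- `ins_k(·, t + 1)` of the paper, with the (0-based) positions shifted by the offset `o`. -/
def residueSublist : ℕ → List α → List α
  | _, [] => []
  | o, b :: l => (if o % k = t then [b] else []) ++ residueSublist (o + 1) l

lemma splitk_eq_residueSublist (j : ℕ) (u : List (ZMod q)) :
    splitk k j u = residueSublist k (j - 1) 0 u := by
  suffices ∀ o, (((u.zipIdx o).map Prod.swap).filter fun p => p.1 % k == j - 1).map Prod.snd =
      residueSublist k (j - 1) o u from this 0
  induction u with
  | nil => intro o; rfl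
  | cons b u ih =>
    intro o
    by_cases ho : o % k = j - 1 <;> simp [residueSublist, ho, ih]

lemma residueSublist_append (o : ℕ) (u v : List α) :
    residueSublist k t o (u ++ v) =
      residueSublist k t o u ++ residueSublist k t (o + u.length) v := by
  induction u generalizing o with
  | nil => simp [residueSublist]
  | cons b u ih => simp [residueSublist, ih, Nat.add_assoc, Nat.add_comm 1]

lemma residueSublist_congr {o o' : ℕ} (h : o % k = o' % k) (l : List α) :
    residueSublist k t o l = residueSublist k t o' l := by
  induction l generalizing o o' with
  | nil => rfl
  | cons b l ih => simp [residueSublist, h, ih (Nat.ModEq.add_right 1 h)]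

lemma residueSublist_add_self (o : ℕ) (l : List α) :
    residueSublist k t (o + k) l = residueSublist k t o l :=
  residueSublist_congr k t (Nat.add_mod_right o k) l

lemma residueSublist_eq_nil {o : ℕ} {l : List α} (h : ∀ i < l.length, (o + i) % k ≠ t) :
    residueSublist k t o l = [] := by
  induction l generalizing o with
  | nil => rfl
  | cons b l ih =>
    have h0 : o % k ≠ t := by simpa using h 0 (by simp)
    simp only [residueSublist, h0, if_false, nil_append]
    exact ih fun i hi => by simpa [Nat.add_assoc, Nat.add_comm 1] using h (i + 1) (by simpa)

lemma length_residueSublist_eq {β : Type*} {o : ℕ} {l : List α} {l' : List β}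
    (h : l.length = l'.length) :
    (residueSublist k t o l).length = (residueSublist k t o l').length := by
  induction l generalizing o l' with
  | nil => simp [residueSublist, eq_nil_of_length_eq_zero h.symm]
  | cons b l ih =>
    cases l' with
    | nil => simp at h
    | cons b' l' => by_cases ho : o % k = t <;> simp [residueSublist, ih (by simpa using h), ho]

variable {k t}

lemma residueSublist_replicate_self (ht : t < k) (o : ℕ) (e : α) :
    residueSublist k t o (replicate k e) = [e] := by
  induction o with
  | zero =>
    have hsplit : replicate k e = replicate t e ++ e :: replicate (k - 1 - t) e := by
      rw [← replicate_succ, ← replicate_add]; congr 1; omega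
    rw [hsplit, residueSublist_append, residueSublist_eq_nil, length_replicate, zero_add]
    · simp only [residueSublist, Nat.mod_eq_of_lt ht, if_true, singleton_append]
      rw [residueSublist_eq_nil, nil_append]
      intro i hi
      simp only [length_replicate] at hi
      rw [Nat.mod_eq_of_lt (by omega)]
      omega
    · intro i hi
      simp only [length_replicate] at hi
      rw [zero_add, Nat.mod_eq_of_lt (by omega)]
      omega
  | succ o ih =>
    -- the windows at `o` and `o + 1` differ only in positions `o` and `o + k`, of the same class
    have h := residueSublist_append k t o [e] (replicate k e)
    rw [singleton_append, ← replicate_succ, replicate_succ', residueSublist_append, ih,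
      length_replicate, residueSublist_add_self, length_singleton] at h
    by_cases ho : o % k = t <;> simp_all [residueSublist]

lemma length_residueSublist_le_one (ht : t < k) (o : ℕ) {l : List α} (hl : l.length ≤ k) :
    (residueSublist k t o l).length ≤ 1 := by
  have hsplit : replicate k () = replicate l.length () ++ replicate (k - l.length) () := by
    rw [← replicate_add]; congr 1; omega
  have h := congrArg length (residueSublist_replicate_self ht o ())
  rw [hsplit, residueSublist_append, length_append,
    ← length_residueSublist_eq k t (length_replicate ..).symm] at h
  simp only [length_singleton] at h
  omega

lemma residueSublist_window (ht : t < k) {s : ℕ} (hs : s < k) (o : ℕ) (z e : α) :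
    residueSublist k t o (replicate s z ++ e :: replicate (k - 1 - s) z) =
      [if (o + s) % k = t then e else z] := by
  have hsplit : replicate k z = replicate s z ++ z :: replicate (k - 1 - s) z := by
    rw [← replicate_succ, ← replicate_add]; congr 1; omega
  by_cases h : (o + s) % k = t
  · subst h
    rw [residueSublist_append, residueSublist_eq_nil, length_replicate]
    · simp only [residueSublist, if_pos, singleton_append, nil_append]
      rw [residueSublist_eq_nil]
      intro i hi
      simpa [Nat.add_assoc] using
        mod_add_ne_mod (d := 1 + i) (by omega) (by simp at hi; omega) (o + s)
    · intro i hi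
      simp only [length_replicate] at hi
      have := mod_add_ne_mod (k := k) (d := s - i) (by omega) (by omega) (o + i)
      rwa [show o + i + (s - i) = o + s by omega, ne_comm] at this
  · have hz := residueSublist_replicate_self ht o z
    rw [hsplit, residueSublist_append] at hz
    rw [residueSublist_append, if_neg h, ← hz]
    simp [residueSublist, h]

lemma residueSublist_insert_windows (ht : t < k) {s₁ s₂ : ℕ} (hs₁ : s₁ < k) (hs₂ : s₂ < k)
    (A M R : List α) (z e₁ e₂ : α) :
    residueSublist k t 0 (A ++ replicate s₁ z ++ e₁ :: (replicate (k - 1 - s₁) z ++ M ++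
        replicate (k - 1 - s₂) z ++ e₂ :: (replicate s₂ z ++ R))) =
      residueSublist k t 0 A ++ [if (A.length + s₁) % k = t then e₁ else z] ++
        residueSublist k t A.length M ++
        [if (A.length + M.length + (k - 1 - s₂)) % k = t then e₂ else z] ++
        residueSublist k t (A.length + M.length) R := by
  set W₁ := replicate s₁ z ++ e₁ :: replicate (k - 1 - s₁) z with hW₁
  set W₂ := replicate (k - 1 - s₂) z ++ e₂ :: replicate (k - 1 - (k - 1 - s₂)) z with hW₂
  have hW₁len : W₁.length = k := by simp [hW₁]; omega
  have hW₂len : W₂.length = k := by simp [hW₂]; omega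
  have hsplit : A ++ replicate s₁ z ++ e₁ :: (replicate (k - 1 - s₁) z ++ M ++
      replicate (k - 1 - s₂) z ++ e₂ :: (replicate s₂ z ++ R)) = A ++ W₁ ++ M ++ W₂ ++ R := by
    simp [hW₁, hW₂, show k - 1 - (k - 1 - s₂) = s₂ by omega]
  rw [hsplit, residueSublist_append, residueSublist_append, residueSublist_append,
    residueSublist_append]
  simp only [length_append, hW₁len, hW₂len, zero_add]
  rw [residueSublist_add_self, Nat.add_right_comm _ k, residueSublist_add_self,
    Nat.add_right_comm _ k, Nat.add_right_comm _ k, residueSublist_add_self,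
    residueSublist_add_self, residueSublist_window ht hs₁, residueSublist_window ht (by omega)]

end Residue

def DipoleInsertion (k : ℕ) (u w : List (ZMod q)) : Prop :=
  ∃ js ∈ Finset.Icc 1 k, ∃ a : ZMod q, a ≠ 0 ∧
    insPair (splitk k js u) (splitk k js w) a (-a) ∧
    ∀ j ∈ Finset.Icc 1 k, j ≠ js →
      (insPair (splitk k j u) (splitk k j w) 0 0 ∨ insSpread0 (splitk k j u) (splitk k j w))

lemma insPair_append (P S : List (ZMod q)) (b c : ZMod q) :
    insPair (P ++ S) (P ++ b :: c :: S) b c :=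
  ⟨P.length, by simp, by simp⟩

lemma insSpread0_append (P S : List (ZMod q)) (g : ZMod q) :
    insSpread0 (P ++ g :: S) (P ++ 0 :: g :: 0 :: S) :=
  ⟨P.length, by simp, by simp⟩

theorem dipoleInsertion_of_windows (A M R : List (ZMod q)) {a : ZMod q} (ha : a ≠ 0)
    {k s₁ s₂ : ℕ} (hs₁ : s₁ < k) (hs₂ : s₂ < k) (hM : M.length + k = s₁ + s₂ + 1) :
    DipoleInsertion k (A ++ M ++ R)
      (A ++ replicate s₁ 0 ++ a :: (replicate (k - 1 - s₁) 0 ++ M ++ replicate (k - 1 - s₂) 0 ++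
        (-a) :: (replicate s₂ 0 ++ R))) := by
  set o := A.length
  set ts := (o + s₁) % k
  have hts : ts < k := Nat.mod_lt _ (by omega)
  have h₂ : (o + M.length + (k - 1 - s₂)) % k = ts := by
    rw [show o + M.length + (k - 1 - s₂) = o + s₁ by omega]
  have hu : ∀ t, residueSublist k t 0 (A ++ M ++ R) = residueSublist k t 0 A ++
      residueSublist k t o M ++ residueSublist k t (o + M.length) R := by
    simp [residueSublist_append, o]
  have hnil : residueSublist k ts o M = [] := by
    refine residueSublist_eq_nil k ts fun i hi => ?_
    have := mod_add_ne_mod (k := k) (d := s₁ - i) (by omega) (by omega) (o + i)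
    rwa [show o + i + (s₁ - i) = o + s₁ by omega, ne_comm] at this
  refine ⟨ts + 1, by simp; omega, a, ha, ?_, fun j hj hne => ?_⟩
  · rw [splitk_eq_residueSublist, splitk_eq_residueSublist, Nat.add_sub_cancel, hu,
      residueSublist_insert_windows hts hs₁ hs₂, h₂, hnil, if_pos rfl, if_pos rfl]
    simpa using insPair_append (residueSublist k ts 0 A) (residueSublist k ts (o + M.length) R)
      a (-a)
  · simp only [Finset.mem_Icc] at hj
    have ht : j - 1 < k := by omega
    have hne' : ts ≠ j - 1 := by omega
    rw [splitk_eq_residueSublist, splitk_eq_residueSublist, hu,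
      residueSublist_insert_windows ht hs₁ hs₂, h₂, if_neg hne', if_neg hne']
    have hle := length_residueSublist_le_one ht o (l := M) (by omega)
    rcases hm : residueSublist k (j - 1) o M with _ | ⟨g, _ | ⟨g', m⟩⟩
    · left
      simpa using insPair_append (residueSublist k (j - 1) 0 A)
        (residueSublist k (j - 1) (o + M.length) R) 0 0
    · right
      simpa using insSpread0_append (residueSublist k (j - 1) 0 A)
        (residueSublist k (j - 1) (o + M.length) R) g
    · simp [hm] at hle

theorem dipoleInsertion_mu_of_runs {Q G S : List (ZMod q)} (hQ : EndsNonzero Q)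
    (hGs : StartsNonzero G) (hGe : EndsNonzero G) (hS : StartsNonzero S) {k L₁ b M₁ M₂ : ℕ}
    (hB : b + G.length + M₁ + 1 = k) {a : ZMod q} (ha : a ≠ 0)
    (hlen : (mu k (Q ++ replicate L₁ 0 ++ a :: (replicate b 0 ++ G ++ replicate M₁ 0 ++
        (-a) :: (replicate M₂ 0 ++ S)))).length =
      (mu k (Q ++ replicate L₁ 0 ++ 0 :: (replicate b 0 ++ G ++ replicate M₁ 0 ++
        0 :: (replicate M₂ 0 ++ S)))).length + 2 * k) :
    DipoleInsertion k
      (mu k (Q ++ replicate L₁ 0 ++ 0 :: (replicate b 0 ++ G ++ replicate M₁ 0 ++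
        0 :: (replicate M₂ 0 ++ S))))
      (mu k (Q ++ replicate L₁ 0 ++ a :: (replicate b 0 ++ G ++ replicate M₁ 0 ++
        (-a) :: (replicate M₂ 0 ++ S)))) := by
  have hk : 0 < k := by omega
  have hc₁ := Nat.mod_lt L₁ hk
  have hc₄ := Nat.mod_lt M₂ hk
  rw [mu_pair_of_ne_zero k hQ hS (by simp; omega) ha (neg_ne_zero.mpr ha)] at hlen ⊢
  suffices ∃ M, mu k (Q ++ replicate L₁ 0 ++ 0 :: (replicate b 0 ++ G ++ replicate M₁ 0 ++
      0 :: (replicate M₂ 0 ++ S))) = mu k Q ++ M ++ mu k S ∧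
      replicate b 0 ++ G ++ replicate M₁ 0 =
        replicate (k - 1 - L₁ % k) 0 ++ M ++ replicate (k - 1 - M₂ % k) 0 by
    obtain ⟨M, hu, hM⟩ := this
    rw [hu, hM]
    have := congrArg length hM
    simp only [length_append, length_replicate] at this
    exact dipoleInsertion_of_windows _ _ _ ha hc₁ hc₄ (by omega)
  rcases eq_or_ne G [] with rfl | hG
  · simp only [append_nil] at hlen ⊢
    rw [mu_zero_pair_of_nil k hQ hS] at hlen ⊢
    simp only [length_append, length_replicate, length_cons, length_nil] at hlen hB
    refine ⟨_, rfl, ?_⟩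
    simp only [← replicate_add]
    congr 1
    omega
  · rw [mu_zero_pair_of_ne_nil k hQ hGs hGe hS hG (by omega)] at hlen ⊢
    refine ⟨_, rfl, ?_⟩
    have hGlen : G.length ≠ 0 := by simpa using hG
    -- each of the two runs split by `a` and `-a` gains `0` or `k`, so both gain exactly `k`
    have h₁ := eq_mod_or_eq_mod_add (k := k) (s := L₁ % k + 1 + b) (by omega)
    have h₂ := eq_mod_or_eq_mod_add (k := k) (s := M₁ + 1 + M₂ % k) (by omega)
    rw [Nat.add_assoc, Nat.mod_add_mod, ← Nat.add_assoc] at h₁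
    rw [Nat.add_mod_mod] at h₂
    simp only [length_append, length_replicate, length_cons] at hlen
    have hb : replicate b (0 : ZMod q) =
        replicate (k - 1 - L₁ % k) 0 ++ replicate ((L₁ + 1 + b) % k) 0 := by
      rw [← replicate_add]; congr 1; omega
    have hM₁ : replicate M₁ (0 : ZMod q) =
        replicate ((M₁ + 1 + M₂) % k) 0 ++ replicate (k - 1 - M₂ % k) 0 := by
      rw [← replicate_add]; congr 1; omega
    rw [hb, hM₁]
    simp only [append_assoc]

theorem dipoleInsertion_mu_addAt {k : ℕ} (hk : 0 < k) (w : List (ZMod q)) {p : ℕ}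
    (hp : w.getD p 0 = 0) {a : ZMod q} (ha : a ≠ 0)
    (hlen : (mu k (addAt (addAt w p a) (p + k) (-a))).length = (mu k w).length + 2 * k) :
    DipoleInsertion k (mu k w) (mu k (addAt (addAt w p a) (p + k) (-a))) := by
  have hy₁ : addAt w p a = w.set p a := by rw [addAt, hp, zero_add]
  have hμy₁ : (mu k (w.set p a)).length ≤ (mu k w).length + k := by
    have := length_mu_set_le k w p (w.getD p 0 + a)
    rwa [if_pos hp, hp, zero_add] at this
  have hv : addAt (addAt w p a) (p + k) (-a) =
      (w.set p a).set (p + k) (w.getD (p + k) 0 + -a) := by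
    rw [addAt, hy₁, getD_set_of_ne _ (by omega)]
  rw [hv] at hlen ⊢
  -- the first substitution gains at most `k`, so the second one must overwrite a `0` of `w`
  have hpk : p + k < w.length := by
    by_contra h
    rw [set_eq_of_length_le (by simp; omega)] at hlen
    omega
  have hf : w.getD (p + k) 0 = 0 := by
    by_contra h
    have := length_mu_set_le k (w.set p a) (p + k) (w.getD (p + k) 0 + -a)
    rw [getD_set_of_ne _ (by omega), if_neg h] at this
    omega
  have hw : w = (w.set p 0).set (p + k) 0 := by
    have set_zero : ∀ i, w.getD i 0 = 0 → i < w.length → w.set i 0 = w := by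
      intro i hi hil
      conv_lhs => rw [← hi, getD_eq_getElem _ _ hil]
      exact set_getElem_self hil
    rw [set_zero p hp (by omega), set_zero (p + k) hf hpk]
  obtain ⟨Q, L₁, b, G, M₁, M₂, S, hQ, hGs, hGe, hS, hB, hset⟩ :=
    exists_runs_around_pair w hk hpk
  rw [hf, zero_add, hset] at hlen ⊢
  rw [hw, hset] at hlen ⊢
  exact dipoleInsertion_mu_of_runs hQ hGs hGe hS hB ha hlen

lemma length_barPhi (k : ℕ) (l : List (ZMod q)) : (barPhi k l).length = l.length - k := by
  simp [barPhi]

lemma getD_barPhi (k : ℕ) (l : List (ZMod q)) {t : ℕ} (ht : t < l.length - k) :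
    (barPhi k l).getD t 0 = l.getD (t + k) 0 - l.getD t 0 := by
  simp [barPhi, ht]

lemma getD_addAt (l : List (ZMod q)) (s : ℕ) (a : ZMod q) {i : ℕ} (hi : i < l.length) :
    (addAt l s a).getD i 0 = l.getD i 0 + if i = s then a else 0 := by
  rcases eq_or_ne s i with rfl | h
  · simp [addAt, hi]
  · rw [addAt, getD_set_of_ne _ h, if_neg (Ne.symm h), add_zero]

lemma barPhi_addAt {k s : ℕ} (hks : k ≤ s) (l : List (ZMod q)) (a : ZMod q) :
    barPhi k (addAt l s a) = addAt (addAt (barPhi k l) (s - k) a) s (-a) := by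
  have hB : (barPhi k l).length = l.length - k := length_barPhi k l
  apply ext_getElem (by simp [addAt, length_barPhi])
  intro t h₁ h₂
  have ht : t < l.length - k := by simpa [addAt, length_barPhi] using h₁
  rw [← getD_eq_getElem _ 0 h₁, ← getD_eq_getElem _ 0 h₂, getD_barPhi k _ (by simpa [addAt]),
    getD_addAt l s a (i := t + k) (by omega), getD_addAt l s a (i := t) (by omega),
    getD_addAt _ s (-a) (i := t) (by simp [addAt]; omega),
    getD_addAt (barPhi k l) (s - k) a (i := t) (by omega), getD_barPhi k l ht]
  split_ifs <;> first | omega | ring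

lemma getD_dup {i k : ℕ} {u : List (ZMod q)} (h : i + k ≤ u.length) (s : ℕ) :
    (dup i k u).getD s 0 = if s < i + k then u.getD s 0 else u.getD (s - k) 0 := by
  rw [dup, if_pos h, ← take_add]
  simp only [getD_eq_getElem?_getD, getElem?_append, length_take, getElem?_take, getElem?_drop]
  split_ifs <;> first | omega | (congr 2; omega) | rfl

lemma barPhi_dup {i k : ℕ} {u : List (ZMod q)} (h : i + k ≤ u.length) :
    barPhi k (dup i k u) = take i (barPhi k u) ++ replicate k 0 ++ drop i (barPhi k u) := by
  have hdup : (dup i k u).length = u.length + k := by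
    rw [dup, if_pos h]; simp; omega
  have hB : ∀ r, r < u.length - k →
      ((barPhi k u)[r]?).getD 0 = u[r + k]?.getD 0 - u[r]?.getD 0 := by
    intro r hr
    simpa [getD_eq_getElem?_getD] using getD_barPhi k u hr
  apply ext_getElem (by simp [length_barPhi, hdup]; omega)
  intro t h₁ h₂
  have ht : t < u.length := by simpa [length_barPhi, hdup] using h₁
  rw [← getD_eq_getElem _ 0 h₁, ← getD_eq_getElem _ 0 h₂, getD_barPhi k _ (by omega),
    getD_dup h, getD_dup h]
  simp only [getD_eq_getElem?_getD, getElem?_append, length_append, length_take, length_replicate,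
    getElem?_take, getElem?_drop, getElem?_replicate, length_barPhi]
  rw [show min i (u.length - k) = i by omega]
  rcases lt_or_ge t i with h₃ | h₃
  · simp [h₃, show t < i + k by omega, hB t (by omega)]
  rcases lt_or_ge t (i + k) with h₄ | h₄
  · simp [h₄, show ¬t + k < i + k by omega, show ¬t < i by omega, show t - i < k by omega]
  · simp only [show ¬t + k < i + k by omega, show ¬t < i + k by omega, if_false,
      show i + (t - (i + k)) = t - k by omega, hB (t - k) (by omega), Nat.add_sub_cancel,
      Nat.sub_add_cancel (show k ≤ t by omega)]

lemma mu_barPhi_of_exactStep {k : ℕ} {u y : List (ZMod q)} (h : ExactStep k u y) :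
    mu k (barPhi k y) = mu k (barPhi k u) := by
  obtain ⟨i, hi, rfl⟩ := h
  rw [barPhi_dup hi, mu_append_replicate_append, take_append_drop]

lemma mu_barPhi_of_exactDesc {k : ℕ} {u y : List (ZMod q)} (h : ExactDesc k u y) :
    mu k (barPhi k y) = mu k (barPhi k u) := by
  induction h with
  | refl => rfl
  | tail _ hstep ih => rw [mu_barPhi_of_exactStep hstep, ih]

lemma exists_barPhi_noisyStep {k : ℕ} {u v : List (ZMod q)} (h : NoisyStep k u v) :
    ∃ (W : List (ZMod q)) (p : ℕ) (a : ZMod q), a ≠ 0 ∧ W.getD p 0 = 0 ∧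
      mu k W = mu k (barPhi k u) ∧ barPhi k v = addAt (addAt W p a) (p + k) (-a) := by
  obtain ⟨i, a, j, hik, ha, hj₁, hj₂, rfl⟩ := h
  refine ⟨barPhi k (dup i k u), j - 1 - k, a, ha, ?_, mu_barPhi_of_exactStep ⟨i, hik, rfl⟩, ?_⟩
  · have hi : (take i (barPhi k u)).length = i := by simp [length_barPhi]; omega
    rw [barPhi_dup hik, getD_append _ _ _ _ (by rw [length_append, hi, length_replicate]; omega),
      getD_append_right _ _ _ _ (by omega), hi, getD_replicate _ (by omega)]
  · rw [barPhi_addAt (by omega), show j - 1 - k + k = j - 1 by omega]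

theorem root_change_plus_2k_general
    (q k : ℕ) (hk : 1 ≤ k)
    (x : List (ZMod q))
    (x'' : List (ZMod q)) (hdesc : x'' ∈ descCone k x)
    (hlen : (mu k (barPhi k x'')).length = (mu k (barPhi k x)).length + 2 * k) :
    ∃ js ∈ Finset.Icc 1 k, ∃ a : ZMod q, a ≠ 0 ∧
      insPair (splitk k js (mu k (barPhi k x)))
        (splitk k js (mu k (barPhi k x''))) a (-a) ∧
      ∀ j ∈ Finset.Icc 1 k, j ≠ js →
        (insPair (splitk k j (mu k (barPhi k x)))
            (splitk k j (mu k (barPhi k x''))) 0 0 ∨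
         insSpread0 (splitk k j (mu k (barPhi k x)))
            (splitk k j (mu k (barPhi k x'')))) := by
  rcases hdesc with hexact | ⟨u, v, hxu, hnoisy, hvx''⟩
  · rw [mu_barPhi_of_exactDesc hexact] at hlen
    omega
  · obtain ⟨W, p, a, ha, hp, hW, hv⟩ := exists_barPhi_noisyStep hnoisy
    rw [← mu_barPhi_of_exactDesc hxu, ← hW, mu_barPhi_of_exactDesc hvx'', hv] at hlen ⊢
    exact dipoleInsertion_mu_addAt hk W hp ha hlen

/-- if the `μ`-root grows by `2k`, then one subsequence gets an
adjacent pair `a, -a` (with `a ≠ 0`) inserted, and every other subsequence gets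
two `0`s inserted that are adjacent or separated by exactly one symbol. -/
theorem root_change_plus_2k
    (q k n : ℕ) (hq : 2 ≤ q) (hk : 1 ≤ k) (hn : 2 * k < n)
    (x : List (ZMod q)) (hx : x.length = n) (hirr : IsIrreducible k x)
    (x'' : List (ZMod q)) (hdesc : x'' ∈ descCone k x)
    (hlen : (mu k (barPhi k x'')).length = (mu k (barPhi k x)).length + 2 * k) :
    ∃ js ∈ Finset.Icc 1 k, ∃ a : ZMod q, a ≠ 0 ∧
      insPair (splitk k js (mu k (barPhi k x)))
        (splitk k js (mu k (barPhi k x''))) a (-a) ∧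
      ∀ j ∈ Finset.Icc 1 k, j ≠ js →
        (insPair (splitk k j (mu k (barPhi k x)))
            (splitk k j (mu k (barPhi k x''))) 0 0 ∨
         insSpread0 (splitk k j (mu k (barPhi k x)))
            (splitk k j (mu k (barPhi k x'')))) :=
  root_change_plus_2k_general q k hk x x'' hdesc hlen

end NoisyDup
end
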